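/- arXiv:1712.02696 — 6 statements merged into one kernel-verified Lean document; each statement's English description precedes it below -/
import Mathlib

section
/- Homological perturbation lemma, part 1 (paper Theorem 'Perturbation lemma', item 1): Let (V,Q), (W,e), p, i, k be a standard situation over a commutative ring R, and let δ : V → V be a small perturbation of Q, i.e. (Q+δ)∘(Q+δ) = 0 and 1_V − δ∘k is invertible. Define Q' = Q + δ, e' = e + p∘(1_V − δ∘k)⁻¹∘δ∘i, p' = p∘(1_V − δ∘k)⁻¹, i' = i + k∘(1_V − δ∘k)⁻¹∘δ∘i, k' = k∘(1_V − δ∘k)⁻¹. Then (V,Q'), (W,e'), p', i', k' is again a standard situation; explicitly: e'∘e' = 0, p'∘Q' = e'∘p', i'∘e' = Q'∘i', and i'∘p' − 1_V = Q'∘k' + k'∘Q'. -/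
/-- **Homological perturbation lemma, part 1.**
Given a standard situation `(V,Q), (W,e), p, i, k` over a commutative ring `R`
and a small perturbation `δ` of `Q` (i.e. `(Q+δ)∘(Q+δ) = 0` and `1 - δ∘k` is
invertible, with two-sided inverse `η`), the perturbed data
`Q' = Q + δ`, `e' = e + p∘η∘δ∘i`, `p' = p∘η`, `i' = i + k∘η∘δ∘i`, `k' = k∘η`
is again a standard situation. -/
theorem perturbation_lemma_part1
    {R V W : Type*} [CommRing R]
    [AddCommGroup V] [Module R V] [AddCommGroup W] [Module R W]
    (Q : V →ₗ[R] V) (e : W →ₗ[R] W)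
    (p : V →ₗ[R] W) (i : W →ₗ[R] V) (k : V →ₗ[R] V)
    (hQ : Q ∘ₗ Q = 0) (he : e ∘ₗ e = 0)
    (hpQ : p ∘ₗ Q = e ∘ₗ p) (hie : i ∘ₗ e = Q ∘ₗ i)
    (hk : i ∘ₗ p - LinearMap.id = Q ∘ₗ k + k ∘ₗ Q)
    (δ : V →ₗ[R] V) (hpert : (Q + δ) ∘ₗ (Q + δ) = 0)
    (η : V →ₗ[R] V)
    (hη₁ : (LinearMap.id - δ ∘ₗ k) ∘ₗ η = LinearMap.id)
    (hη₂ : η ∘ₗ (LinearMap.id - δ ∘ₗ k) = LinearMap.id) :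
    let Q' : V →ₗ[R] V := Q + δ
    let e' : W →ₗ[R] W := e + p ∘ₗ (η ∘ₗ (δ ∘ₗ i))
    let p' : V →ₗ[R] W := p ∘ₗ η
    let i' : W →ₗ[R] V := i + k ∘ₗ (η ∘ₗ (δ ∘ₗ i))
    let k' : V →ₗ[R] V := k ∘ₗ η
    Q' ∘ₗ Q' = 0 ∧
    e' ∘ₗ e' = 0 ∧
    p' ∘ₗ Q' = e' ∘ₗ p' ∧
    i' ∘ₗ e' = Q' ∘ₗ i' ∧
    i' ∘ₗ p' - LinearMap.id = Q' ∘ₗ k' + k' ∘ₗ Q' := by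
  intro Q' e' p' i' k'
  -- multiplicative (endomorphism-ring) versions of the hypotheses
  have hQm : Q * Q = 0 := by rw [Module.End.mul_eq_comp]; exact hQ
  have hper : Q * δ + δ * Q + δ * δ = 0 := by
    have h : (Q + δ) * (Q + δ) = 0 := by rw [Module.End.mul_eq_comp]; exact hpert
    have cert : Q * δ + δ * Q + δ * δ = (Q + δ) * (Q + δ) - Q * Q := by noncomm_ring
    rw [cert, h, hQm, sub_zero]
  have h1 : η * δ * k = η - 1 := by
    have h : η * (1 - δ * k) = 1 := by
      simp only [Module.End.mul_eq_comp, Module.End.one_eq_id]; exact hη₂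
    have cert : η * δ * k = η - η * (1 - δ * k) := by noncomm_ring
    rw [cert, h]
  have h2 : δ * k * η = η - 1 := by
    have h : (1 - δ * k) * η = 1 := by
      simp only [Module.End.mul_eq_comp, Module.End.one_eq_id]; exact hη₁
    have cert : δ * k * η = η - (1 - δ * k) * η := by noncomm_ring
    rw [cert, h]
  -- the four key operator identities, proved via explicit certificates
  have E : Q * (η * δ) + η * (δ * Q) + η * (δ * (η * δ)) + η * (δ * (Q * (k * (η * δ))))
      + η * (δ * (k * (Q * (η * δ)))) = 0 := by
    have cert : Q * (η * δ) + η * (δ * Q) + η * (δ * (η * δ)) + η * (δ * (Q * (k * (η * δ))))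
        + η * (δ * (k * (Q * (η * δ))))
        = η * (Q * δ + δ * Q + δ * δ) * (1 + k * (η * δ))
          - η * (δ + Q) * (δ * k * η - (η - 1)) * δ
          + (η * δ * k - (η - 1)) * (Q * (η * δ)) := by noncomm_ring
    rw [cert, hper, h1, h2]; noncomm_ring
  have I3 : η * Q + η * δ
      = Q * η + η * (δ * η) + η * (δ * (Q * (k * η))) + η * (δ * (k * (Q * η))) := by
    have cert : Q * η + η * (δ * η) + η * (δ * (Q * (k * η))) + η * (δ * (k * (Q * η)))
        = η * Q + η * δ
          + (η * (Q * δ + δ * Q + δ * δ) * (k * η)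
            + (η * δ * k - (η - 1)) * (Q * η)
            - η * (δ + Q) * (δ * k * η - (η - 1))) := by noncomm_ring
    rw [cert, hper, h1, h2]; noncomm_ring
  have I4 : Q + η * δ + Q * (k * (η * δ)) + k * (Q * (η * δ)) + k * (η * (δ * Q))
      + k * (η * (δ * (η * δ))) + k * (η * (δ * (Q * (k * (η * δ)))))
      + k * (η * (δ * (k * (Q * (η * δ)))))
      = Q + δ + Q * (k * (η * δ)) + δ * (k * (η * δ)) := by
    have cert : Q + η * δ + Q * (k * (η * δ)) + k * (Q * (η * δ)) + k * (η * (δ * Q))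
        + k * (η * (δ * (η * δ))) + k * (η * (δ * (Q * (k * (η * δ)))))
        + k * (η * (δ * (k * (Q * (η * δ)))))
        = Q + δ + Q * (k * (η * δ)) + δ * (k * (η * δ))
          + (k * (η * (Q * δ + δ * Q + δ * δ) * (1 + k * (η * δ))
              - η * (δ + Q) * (δ * k * η - (η - 1)) * δ
              + (η * δ * k - (η - 1)) * (Q * (η * δ)))
            - (δ * k * η - (η - 1)) * δ) := by noncomm_ring
    rw [cert, hper, h1, h2]; noncomm_ring
  have I5 : η + Q * (k * η) + k * (Q * η) + k * (η * (δ * η)) + k * (η * (δ * (Q * (k * η))))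
      + k * (η * (δ * (k * (Q * η)))) - 1
      = Q * (k * η) + δ * (k * η) + k * (η * Q) + k * (η * δ) := by
    have cert : η + Q * (k * η) + k * (Q * η) + k * (η * (δ * η)) + k * (η * (δ * (Q * (k * η))))
        + k * (η * (δ * (k * (Q * η)))) - 1
        = Q * (k * η) + δ * (k * η) + k * (η * Q) + k * (η * δ)
          + (k * (η * (Q * δ + δ * Q + δ * δ) * (k * η)
              + (η * δ * k - (η - 1)) * (Q * η)
              - η * (δ + Q) * (δ * k * η - (η - 1)))
            - (δ * k * η - (η - 1))) := by noncomm_ring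
    rw [cert, hper, h1, h2]; noncomm_ring
  -- lifted composition rules from the standard-situation hypotheses
  have hip : i ∘ₗ p = LinearMap.id + (Q ∘ₗ k + k ∘ₗ Q) := by rw [← hk]; abel
  have hipX : ∀ (X : W →ₗ[R] V),
      i ∘ₗ (p ∘ₗ X) = X + (Q ∘ₗ (k ∘ₗ X) + k ∘ₗ (Q ∘ₗ X)) := by
    intro X
    rw [← LinearMap.comp_assoc X p i, hip]
    simp only [LinearMap.add_comp, LinearMap.id_comp, LinearMap.comp_assoc]
  have hpQX : ∀ (X : W →ₗ[R] V), e ∘ₗ (p ∘ₗ X) = p ∘ₗ (Q ∘ₗ X) := by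
    intro X
    rw [← LinearMap.comp_assoc X p e, ← hpQ, LinearMap.comp_assoc]
  have hipXV : ∀ (X : V →ₗ[R] V),
      i ∘ₗ (p ∘ₗ X) = X + (Q ∘ₗ (k ∘ₗ X) + k ∘ₗ (Q ∘ₗ X)) := by
    intro X
    rw [← LinearMap.comp_assoc X p i, hip]
    simp only [LinearMap.add_comp, LinearMap.id_comp, LinearMap.comp_assoc]
  have hpQXV : ∀ (X : V →ₗ[R] V), e ∘ₗ (p ∘ₗ X) = p ∘ₗ (Q ∘ₗ X) := by
    intro X
    rw [← LinearMap.comp_assoc X p e, ← hpQ, LinearMap.comp_assoc]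
  refine ⟨hpert, ?_, ?_, ?_, ?_⟩
  · -- e' ∘ e' = 0
    show (e + p ∘ₗ (η ∘ₗ (δ ∘ₗ i))) ∘ₗ (e + p ∘ₗ (η ∘ₗ (δ ∘ₗ i))) = 0
    have EI := congrArg (fun f => p ∘ₗ (f ∘ₗ i)) E
    simp only [Module.End.mul_eq_comp, LinearMap.add_comp, LinearMap.comp_add,
      LinearMap.comp_assoc, LinearMap.zero_comp, LinearMap.comp_zero] at EI
    simp only [LinearMap.add_comp, LinearMap.comp_add, LinearMap.comp_assoc, he, hie,
      hpQX, hipX, hpQXV, hipXV, LinearMap.comp_zero, LinearMap.zero_comp, zero_add, add_zero]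
    abel_nf at EI ⊢
    exact EI
  · -- p' ∘ Q' = e' ∘ p'
    show (p ∘ₗ η) ∘ₗ (Q + δ) = (e + p ∘ₗ (η ∘ₗ (δ ∘ₗ i))) ∘ₗ (p ∘ₗ η)
    have I3I := congrArg (fun f => p ∘ₗ f) I3
    simp only [Module.End.mul_eq_comp, LinearMap.add_comp, LinearMap.comp_add,
      LinearMap.comp_assoc] at I3I
    simp only [LinearMap.add_comp, LinearMap.comp_add, LinearMap.comp_assoc,
      hpQX, hipX, hpQXV, hipXV]
    abel_nf at I3I ⊢
    exact I3I
  · -- i' ∘ e' = Q' ∘ i'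
    show (i + k ∘ₗ (η ∘ₗ (δ ∘ₗ i))) ∘ₗ (e + p ∘ₗ (η ∘ₗ (δ ∘ₗ i)))
        = (Q + δ) ∘ₗ (i + k ∘ₗ (η ∘ₗ (δ ∘ₗ i)))
    have I4I := congrArg (fun f => f ∘ₗ i) I4
    simp only [Module.End.mul_eq_comp, LinearMap.add_comp, LinearMap.comp_add,
      LinearMap.comp_assoc] at I4I
    simp only [LinearMap.add_comp, LinearMap.comp_add, LinearMap.comp_assoc, hie,
      hpQX, hipX, hpQXV, hipXV]
    abel_nf at I4I ⊢
    exact I4I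
  · -- i' ∘ p' - id = Q' ∘ k' + k' ∘ Q'
    show (i + k ∘ₗ (η ∘ₗ (δ ∘ₗ i))) ∘ₗ (p ∘ₗ η) - LinearMap.id
        = (Q + δ) ∘ₗ (k ∘ₗ η) + (k ∘ₗ η) ∘ₗ (Q + δ)
    have I5' := I5
    simp only [Module.End.mul_eq_comp, Module.End.one_eq_id] at I5'
    simp only [LinearMap.add_comp, LinearMap.comp_add, LinearMap.sub_comp,
      LinearMap.comp_sub, LinearMap.comp_assoc, hpQX, hipX, hpQXV, hipXV]
    abel_nf at I5' ⊢
    exact I5'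
end

section
/- Homological perturbation lemma, part 2 (paper Theorem 'Perturbation lemma', item 2): Let (V,Q), (W,e), p, i, k be a standard situation over a commutative ring R and δ : V → V a small perturbation, with perturbed data Q' = Q + δ, e' = e + p∘(1_V − δ∘k)⁻¹∘δ∘i, p' = p∘(1_V − δ∘k)⁻¹. If the map induced by p from the homology ker Q / range Q to the homology ker e / range e is bijective, then the map induced by p' from ker Q' / range Q' to ker e' / range e' is bijective. -/
/-- **Homological perturbation lemma, part 2.**
Given a standard situation `(V,Q), (W,e), p, i, k` over a commutative ring `R`
and a small perturbation `δ` (with `η` a two-sided inverse of `1 - δ∘k`),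
if the map induced by `p` from the homology `ker Q / range Q` to the homology
`ker e / range e` is bijective (stated elementwise: it is injective, i.e.
every `Q`-cycle whose image under `p` is an `e`-boundary is a `Q`-boundary,
and surjective, i.e. every `e`-cycle is, modulo `e`-boundaries, the image of a
`Q`-cycle), then the map induced by the perturbed projection `p' = p∘η`
from `ker Q' / range Q'` to `ker e' / range e'` is bijective, where
`Q' = Q + δ` and `e' = e + p∘η∘δ∘i`. -/
theorem perturbation_lemma_part2
    {R V W : Type*} [CommRing R]
    [AddCommGroup V] [Module R V] [AddCommGroup W] [Module R W]
    (Q : V →ₗ[R] V) (e : W →ₗ[R] W)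
    (p : V →ₗ[R] W) (i : W →ₗ[R] V) (k : V →ₗ[R] V)
    (hQ : Q ∘ₗ Q = 0) (he : e ∘ₗ e = 0)
    (hpQ : p ∘ₗ Q = e ∘ₗ p) (hie : i ∘ₗ e = Q ∘ₗ i)
    (hk : i ∘ₗ p - LinearMap.id = Q ∘ₗ k + k ∘ₗ Q)
    (δ : V →ₗ[R] V) (hpert : (Q + δ) ∘ₗ (Q + δ) = 0)
    (η : V →ₗ[R] V)
    (hη₁ : (LinearMap.id - δ ∘ₗ k) ∘ₗ η = LinearMap.id)
    (hη₂ : η ∘ₗ (LinearMap.id - δ ∘ₗ k) = LinearMap.id)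
    -- the map induced by `p` on homology is injective:
    (hinj : ∀ v : V, Q v = 0 → (∃ u : W, p v = e u) → ∃ x : V, Q x = v)
    -- the map induced by `p` on homology is surjective:
    (hsurj : ∀ w : W, e w = 0 → ∃ v : V, Q v = 0 ∧ ∃ u : W, p v - w = e u) :
    let Q' : V →ₗ[R] V := Q + δ
    let e' : W →ₗ[R] W := e + p ∘ₗ (η ∘ₗ (δ ∘ₗ i))
    let p' : V →ₗ[R] W := p ∘ₗ η
    -- the map induced by `p'` on the perturbed homology is injective:
    (∀ v : V, Q' v = 0 → (∃ u : W, p' v = e' u) → ∃ x : V, Q' x = v) ∧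
    -- and surjective:
    (∀ w : W, e' w = 0 → ∃ v : V, Q' v = 0 ∧ ∃ u : W, p' v - w = e' u) := by
  intro Q' e' p'
  -- definitional unfoldings
  have hQ'a : ∀ x, Q' x = Q x + δ x := fun x => rfl
  have he'a : ∀ u, e' u = e u + p (η (δ (i u))) := fun u => rfl
  have hp'a : ∀ x, p' x = p (η x) := fun x => rfl
  -- pointwise hypotheses
  have hQ0 : ∀ x, Q (Q x) = 0 := fun x => LinearMap.ext_iff.mp hQ x
  have hpQ0 : ∀ x, p (Q x) = e (p x) := fun x => LinearMap.ext_iff.mp hpQ x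
  have hie0 : ∀ u, i (e u) = Q (i u) := fun u => LinearMap.ext_iff.mp hie u
  have hk0 : ∀ x, i (p x) - x = Q (k x) + k (Q x) := fun x => LinearMap.ext_iff.mp hk x
  have hη₁0 : ∀ x, η x - δ (k (η x)) = x := fun x => LinearMap.ext_iff.mp hη₁ x
  have hη₂0 : ∀ x, η (x - δ (k x)) = x := fun x => LinearMap.ext_iff.mp hη₂ x
  have hpert0 : ∀ x, Q (δ x) + δ (Q x) + δ (δ x) = 0 := by
    intro x
    have h := LinearMap.ext_iff.mp hpert x
    simp only [LinearMap.comp_apply, LinearMap.add_apply, LinearMap.zero_apply, map_add, hQ0,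
      zero_add] at h
    linear_combination (norm := module) h
  have D1 : ∀ x, δ (k (η x)) = η x - x := by
    intro x
    linear_combination (norm := module) -hη₁0 x
  have D2 : ∀ x, η (δ (k x)) = η x - x := by
    intro x
    have h := hη₂0 x
    rw [map_sub] at h
    linear_combination (norm := module) -h
  -- splitting of Q' x in terms of y = η x
  have hsplit : ∀ x, Q x + δ x = Q (η x) + δ (i (p (η x))) - δ (k (Q (η x))) := by
    intro x
    have hQk : Q (k (η x)) = i (p (η x)) - η x - k (Q (η x)) := by
      linear_combination (norm := module) -hk0 (η x)
    have g : δ (Q (k (η x))) = δ (i (p (η x))) - δ (η x) - δ (k (Q (η x))) := by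
      rw [hQk]
      simp only [map_sub]
    conv_lhs => rw [← hη₁0 x]
    simp only [map_sub]
    linear_combination (norm := module) -hpert0 (k (η x)) + g
  -- identity (a): p' Q' = e' p'
  have aPt : ∀ x, p (η (Q x + δ x)) = e' (p (η x)) := by
    intro x
    rw [hsplit x, he'a]
    simp only [map_add, map_sub]
    rw [D2 (Q (η x))]
    simp only [map_sub]
    rw [hpQ0 (η x)]
    abel
  -- identity (b'): (1 - kδ) Q' ξ = Q + i p η δ, pointwise
  have bPre : ∀ z, Q z + i (p (η (δ z))) =
      Q' (z + k (η (δ z))) - k (δ (Q' (z + k (η (δ z))))) := by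
    intro z
    have h1 : Q' (z + k (η (δ z))) = Q z + Q (k (η (δ z))) + η (δ z) := by
      rw [hQ'a]
      simp only [map_add]
      rw [D1 (δ z)]
      abel
    have h2 : δ (Q' (z + k (η (δ z)))) = - Q (η (δ z)) := by
      rw [h1]
      simp only [map_add]
      have f1 : Q (δ (k (η (δ z)))) = Q (η (δ z)) - Q (δ z) := by rw [D1 (δ z), map_sub]
      have f2 : δ (δ (k (η (δ z)))) = δ (η (δ z)) - δ (δ z) := by rw [D1 (δ z), map_sub]
      linear_combination (norm := module) hpert0 (k (η (δ z))) - f1 - f2 + hpert0 z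
    rw [h2, map_neg, h1]
    linear_combination (norm := module) hk0 (η (δ z))
  -- ξ ∘ (1 - kδ) = 1 pointwise
  have D3 : ∀ x, (x - k (δ x)) + k (η (δ (x - k (δ x)))) = x := by
    intro x
    have f : η (δ (x - k (δ x))) = δ x := by
      rw [map_sub, map_sub]
      rw [D2 (δ x)]
      abel
    rw [f]
    abel
  -- identity (b): i' e' = Q' i'
  have bPt : ∀ u, i (e' u) + k (η (δ (i (e' u)))) = Q' (i u + k (η (δ (i u)))) := by
    intro u
    have h2 : i (e' u) =
        Q' (i u + k (η (δ (i u)))) - k (δ (Q' (i u + k (η (δ (i u)))))) := by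
      rw [he'a, map_add, hie0]
      exact bPre (i u)
    rw [h2]
    exact D3 (Q' (i u + k (η (δ (i u)))))
  -- identity (c): i' p' - 1 = Q' k' + k' Q'
  have cPt : ∀ x, (i (p (η x)) + k (η (δ (i (p (η x)))))) - x
      = Q' (k (η x)) + k (η (Q' x)) := by
    intro x
    have h1 : η (Q' x) = η (δ (i (p (η x)))) + Q (η x) := by
      rw [hQ'a, hsplit x]
      simp only [map_add, map_sub]
      rw [D2 (Q (η x))]
      abel
    have f1 : k (η (Q' x)) = k (η (δ (i (p (η x))))) + k (Q (η x)) := by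
      rw [h1, map_add]
    have f0 : Q' (k (η x)) = Q (k (η x)) + δ (k (η x)) := hQ'a _
    linear_combination (norm := module) - f0 - f1 + hk0 (η x) + hη₁0 x
  refine ⟨?_, ?_⟩
  · -- injectivity of the map induced by p'
    rintro v hv ⟨u, hu⟩
    refine ⟨(i u + k (η (δ (i u)))) - k (η v), ?_⟩
    have hc := cPt v
    rw [hv] at hc
    simp only [map_zero, add_zero] at hc
    rw [hp'a] at hu
    rw [hu] at hc
    rw [bPt u] at hc
    rw [map_sub]
    linear_combination (norm := module) hc
  · -- surjectivity of the map induced by p'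
    intro w hw
    set m : V := i w + k (η (δ (i w))) with hmdef
    have S1 : Q' m = 0 := by
      have h := bPt w
      rw [hw] at h
      simp only [map_zero, add_zero, zero_add] at h
      rw [hmdef]
      exact h.symm
    have S2 : δ m = η (δ (i w)) := by
      rw [hmdef, map_add, D1 (δ (i w))]
      abel
    have S3 : Q m = - η (δ (i w)) := by
      have h := hQ'a m
      rw [S1, S2] at h
      linear_combination (norm := module) -h
    have S4 : e w = - p (η (δ (i w))) := by
      have h := (he'a w).symm.trans hw
      linear_combination (norm := module) h
    have S5 : e (w - p m) = 0 := by
      rw [map_sub, ← hpQ0 m, S3, map_neg, S4]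
      abel
    obtain ⟨v₁, hv₁, u₁, hu₁⟩ := hsurj (w - p m) S5
    have g4 : Q (k v₁) = i (p v₁) - v₁ := by
      have h := hk0 v₁
      rw [hv₁, map_zero, add_zero] at h
      exact h.symm
    have t5 : δ (Q (i u₁)) = δ (i (p v₁)) - δ (i w) + δ (i (p m)) := by
      rw [← hie0 u₁, ← hu₁]
      simp only [map_sub]
      abel
    have t6 : δ (Q (k v₁)) = δ (i (p v₁)) - δ v₁ := by rw [g4, map_sub]
    have g5 : Q (k m) = i (p m) - m + k (η (δ (i w))) := by
      have h := hk0 m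
      rw [S3, map_neg] at h
      linear_combination (norm := module) -h
    have t7 : δ (Q (k m)) = δ (i (p m)) - δ (i w) := by
      rw [g5]
      simp only [map_sub, map_add]
      rw [D1 (δ (i w)), S2]
      abel
    have S6 : Q' (v₁ + δ (i u₁) - δ (k v₁) + Q (k m)) = 0 := by
      rw [hQ'a]
      simp only [map_add, map_sub]
      linear_combination (norm := module) hv₁ + hQ0 (k m) + hpert0 (i u₁)
        - hpert0 (k v₁) - t5 + t6 + t7
    refine ⟨m + (v₁ + δ (i u₁) - δ (k v₁) + Q (k m)), ?_, u₁ + p (η (k m)), ?_⟩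
    · rw [map_add, S1, S6, add_zero]
    · have q1 : ∀ x, p (η (δ (k x))) = p (η x) - p x := fun x => by rw [D2 x, map_sub]
      have r3 : p (η (Q (k m))) + p (η (δ (k m))) = e' (p (η (k m))) := by
        have h := aPt (k m)
        simp only [map_add] at h
        exact h
      rw [hp'a]
      simp only [map_add, map_sub]
      linear_combination (norm := module) -q1 m - q1 v₁ + r3 + hu₁ - he'a u₁
end

section
/- Homological perturbation lemma, part 3 (paper Theorem 'Perturbation lemma', item 3): Let (V,Q), (W,e), p, i, k be a deformation retract (a standard situation with additionally p∘i = 1_W) and δ : V → V a small perturbation, with perturbed maps p' = p∘(1_V − δ∘k)⁻¹ and i' = i + k∘(1_V − δ∘k)⁻¹∘δ∘i. Set A := (1_V − δ∘k)⁻¹∘δ. Then the perturbed data is again a deformation retract, i.e. p'∘i' = 1_W, if and only if p∘(A∘k∘k∘A + A∘k + k∘A)∘i = 0. -/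
/-- **Homological perturbation lemma, part 3.**
Let `(V,Q), (W,e), p, i, k` be a deformation retract (a standard situation
with additionally `p∘i = 1`) and `δ` a small perturbation (with `η` a
two-sided inverse of `1 - δ∘k`). With the perturbed maps `p' = p∘η` and
`i' = i + k∘η∘δ∘i`, and `A := η∘δ`, the perturbed data is again a deformation
retract, i.e. `p'∘i' = 1`, if and only if
`p∘(A∘k∘k∘A + A∘k + k∘A)∘i = 0`. -/
theorem perturbation_lemma_part3
    {R V W : Type*} [CommRing R]
    [AddCommGroup V] [Module R V] [AddCommGroup W] [Module R W]
    (Q : V →ₗ[R] V) (e : W →ₗ[R] W)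
    (p : V →ₗ[R] W) (i : W →ₗ[R] V) (k : V →ₗ[R] V)
    (hQ : Q ∘ₗ Q = 0) (he : e ∘ₗ e = 0)
    (hpQ : p ∘ₗ Q = e ∘ₗ p) (hie : i ∘ₗ e = Q ∘ₗ i)
    (hk : i ∘ₗ p - LinearMap.id = Q ∘ₗ k + k ∘ₗ Q)
    (hpi : p ∘ₗ i = LinearMap.id)
    (δ : V →ₗ[R] V) (hpert : (Q + δ) ∘ₗ (Q + δ) = 0)
    (η : V →ₗ[R] V)
    (hη₁ : (LinearMap.id - δ ∘ₗ k) ∘ₗ η = LinearMap.id)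
    (hη₂ : η ∘ₗ (LinearMap.id - δ ∘ₗ k) = LinearMap.id) :
    let p' : V →ₗ[R] W := p ∘ₗ η
    let i' : W →ₗ[R] V := i + k ∘ₗ (η ∘ₗ (δ ∘ₗ i))
    let A : V →ₗ[R] V := η ∘ₗ δ
    (p' ∘ₗ i' = LinearMap.id ↔
      p ∘ₗ (A ∘ₗ (k ∘ₗ (k ∘ₗ A)) + A ∘ₗ k + k ∘ₗ A) ∘ₗ i = 0) := by
  intro p' i' A
  have hη : η = LinearMap.id + A ∘ₗ k := by
    have h : η - η ∘ₗ (δ ∘ₗ k) = LinearMap.id := by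
      simpa [LinearMap.comp_sub] using hη₂
    have h2 : A ∘ₗ k = η ∘ₗ (δ ∘ₗ k) := LinearMap.comp_assoc _ _ _
    rw [h2, ← h]; abel
  have key : p' ∘ₗ i' = LinearMap.id +
      p ∘ₗ (A ∘ₗ (k ∘ₗ (k ∘ₗ A)) + A ∘ₗ k + k ∘ₗ A) ∘ₗ i := by
    show (p ∘ₗ η) ∘ₗ i' = _
    rw [hη]
    simp only [i', A, LinearMap.comp_add, LinearMap.add_comp, LinearMap.comp_id,
      LinearMap.id_comp, LinearMap.comp_assoc, hpi]
    abel
  rw [key, add_eq_left]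
end

section
/- Homological perturbation lemma, part 4 (paper Theorem 'Perturbation lemma', item 4): Let (V,Q), (W,e), p, i, k be a special deformation retract (a standard situation with p∘i = 1_W, p∘k = 0, k∘i = 0, k∘k = 0) and δ : V → V a small perturbation. Then the perturbed data Q' = Q + δ, e' = e + p∘(1_V − δ∘k)⁻¹∘δ∘i, p' = p∘(1_V − δ∘k)⁻¹, i' = i + k∘(1_V − δ∘k)⁻¹∘δ∘i, k' = k∘(1_V − δ∘k)⁻¹ is again a special deformation retract: it is a standard situation and moreover p'∘i' = 1_W, p'∘k' = 0, k'∘i' = 0, k'∘k' = 0. -/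
/-- **Homological perturbation lemma, part 4.**
Let `(V,Q), (W,e), p, i, k` be a special deformation retract (a standard
situation with `p∘i = 1`, `p∘k = 0`, `k∘i = 0`, `k∘k = 0`) and `δ` a small
perturbation (with `η` a two-sided inverse of `1 - δ∘k`). Then the perturbed
data `Q' = Q + δ`, `e' = e + p∘η∘δ∘i`, `p' = p∘η`, `i' = i + k∘η∘δ∘i`,
`k' = k∘η` is again a special deformation retract. -/
theorem perturbation_lemma_part4
    {R V W : Type*} [CommRing R]
    [AddCommGroup V] [Module R V] [AddCommGroup W] [Module R W]
    (Q : V →ₗ[R] V) (e : W →ₗ[R] W)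
    (p : V →ₗ[R] W) (i : W →ₗ[R] V) (k : V →ₗ[R] V)
    (hQ : Q ∘ₗ Q = 0) (he : e ∘ₗ e = 0)
    (hpQ : p ∘ₗ Q = e ∘ₗ p) (hie : i ∘ₗ e = Q ∘ₗ i)
    (hk : i ∘ₗ p - LinearMap.id = Q ∘ₗ k + k ∘ₗ Q)
    (hpi : p ∘ₗ i = LinearMap.id)
    (hpk : p ∘ₗ k = 0) (hki : k ∘ₗ i = 0) (hkk : k ∘ₗ k = 0)
    (δ : V →ₗ[R] V) (hpert : (Q + δ) ∘ₗ (Q + δ) = 0)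
    (η : V →ₗ[R] V)
    (hη₁ : (LinearMap.id - δ ∘ₗ k) ∘ₗ η = LinearMap.id)
    (hη₂ : η ∘ₗ (LinearMap.id - δ ∘ₗ k) = LinearMap.id) :
    let Q' : V →ₗ[R] V := Q + δ
    let e' : W →ₗ[R] W := e + p ∘ₗ (η ∘ₗ (δ ∘ₗ i))
    let p' : V →ₗ[R] W := p ∘ₗ η
    let i' : W →ₗ[R] V := i + k ∘ₗ (η ∘ₗ (δ ∘ₗ i))
    let k' : V →ₗ[R] V := k ∘ₗ η
    -- it is a standard situation:
    Q' ∘ₗ Q' = 0 ∧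
    e' ∘ₗ e' = 0 ∧
    p' ∘ₗ Q' = e' ∘ₗ p' ∧
    i' ∘ₗ e' = Q' ∘ₗ i' ∧
    i' ∘ₗ p' - LinearMap.id = Q' ∘ₗ k' + k' ∘ₗ Q' ∧
    -- and moreover a special deformation retract:
    p' ∘ₗ i' = LinearMap.id ∧
    p' ∘ₗ k' = 0 ∧
    k' ∘ₗ i' = 0 ∧
    k' ∘ₗ k' = 0 := by
  intro Q' e' p' i' k'
  have s1 : ∀ x, Q (Q x) = 0 := fun x => by simpa using LinearMap.ext_iff.mp hQ x
  have s3 : ∀ x, e (p x) = p (Q x) := fun x => by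
    simpa using (LinearMap.ext_iff.mp hpQ x).symm
  have s4 : ∀ x, i (e x) = Q (i x) := fun x => by simpa using LinearMap.ext_iff.mp hie x
  have s5 : ∀ x, i (p x) = x + Q (k x) + k (Q x) := fun x => by
    have h := LinearMap.ext_iff.mp hk x
    simp only [LinearMap.sub_apply, LinearMap.add_apply, LinearMap.coe_comp,
      Function.comp_apply, LinearMap.id_coe, id_eq] at h
    rw [sub_eq_iff_eq_add] at h
    rw [h]; abel
  have s6 : ∀ x, p (i x) = x := fun x => by simpa using LinearMap.ext_iff.mp hpi x
  have s7 : ∀ x, p (k x) = 0 := fun x => by simpa using LinearMap.ext_iff.mp hpk x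
  have s8 : ∀ x, k (i x) = 0 := fun x => by simpa using LinearMap.ext_iff.mp hki x
  have s9 : ∀ x, k (k x) = 0 := fun x => by simpa using LinearMap.ext_iff.mp hkk x
  have hη1p : ∀ x, η x - δ (k (η x)) = x := fun x => by
    simpa using LinearMap.ext_iff.mp hη₁ x
  have hη2p : ∀ x, η (x - δ (k x)) = x := fun x => by
    simpa using LinearMap.ext_iff.mp hη₂ x
  have s10 : ∀ x, δ (k (η x)) = η x - x := fun x =>
    eq_sub_of_add_eq (by rw [add_comm]; exact (sub_eq_iff_eq_add.mp (hη1p x)).symm)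
  have s11 : ∀ x, η (δ (k x)) = η x - x := fun x => by
    have h := hη2p x
    rw [map_sub] at h
    exact eq_sub_of_add_eq (by rw [add_comm]; exact (sub_eq_iff_eq_add.mp h).symm)
  have t12 : ∀ x, δ (Q x) = -Q (δ x) - δ (δ x) := fun x => by
    have h := LinearMap.ext_iff.mp hpert x
    simp only [LinearMap.add_apply, LinearMap.coe_comp, Function.comp_apply,
      LinearMap.zero_apply, map_add, s1, zero_add] at h
    rw [eq_neg_of_add_eq_zero_left h]; abel
  have L1 : ∀ x, η (i x) = i x := fun x => by
    have := hη2p (i x); rwa [s8, map_zero, sub_zero] at this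
  have L2 : ∀ x, η (k x) = k x := fun x => by
    have := hη2p (k x); rwa [s9, map_zero, sub_zero] at this
  have h1 : Q' ∘ₗ Q' = 0 := hpert
  have h1p : ∀ x, Q' (Q' x) = 0 := fun x => by simpa using LinearMap.ext_iff.mp h1 x
  have h3 : p' ∘ₗ Q' = e' ∘ₗ p' := by
    ext v
    obtain ⟨w, rfl⟩ : ∃ w, v = w - δ (k w) := ⟨η v, (hη2p v ▸ rfl : v = v) ▸ (by
      have h := hη1p v; exact h.symm ▸ rfl)⟩
    simp only [p', Q', e', LinearMap.add_apply, LinearMap.coe_comp, Function.comp_apply,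
      map_add, map_sub, map_neg, hη2p, s3, s4, s5, s6, s7, s8, s9, s10, s11, t12]
    abel
  have h4 : i' ∘ₗ e' = Q' ∘ₗ i' := by
    ext u
    simp only [i', Q', e', LinearMap.add_apply, LinearMap.coe_comp, Function.comp_apply,
      map_add, map_sub, map_neg, s3, s4, s5, s6, s7, s8, s9, s10, s11, t12]
    abel
  have h5 : i' ∘ₗ p' - LinearMap.id = Q' ∘ₗ k' + k' ∘ₗ Q' := by
    ext v
    obtain ⟨w, rfl⟩ : ∃ w, v = w - δ (k w) := ⟨η v, by
      have h := hη1p v; exact h.symm⟩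
    simp only [i', p', Q', k', LinearMap.sub_apply, LinearMap.add_apply, LinearMap.coe_comp,
      Function.comp_apply, LinearMap.id_coe, id_eq,
      map_add, map_sub, map_neg, hη2p, s3, s4, s5, s6, s7, s8, s9, s10, s11, t12]
    abel
  have h6 : p' ∘ₗ i' = LinearMap.id := by
    ext u
    simp only [p', i', LinearMap.coe_comp, Function.comp_apply, LinearMap.add_apply,
      LinearMap.id_coe, id_eq, map_add, L1, L2, s6, s7, add_zero]
  have h7 : p' ∘ₗ k' = 0 := by
    ext v
    simp only [p', k', LinearMap.coe_comp, Function.comp_apply, LinearMap.zero_apply, L2, s7]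
  have h8 : k' ∘ₗ i' = 0 := by
    ext u
    simp only [k', i', LinearMap.coe_comp, Function.comp_apply, LinearMap.add_apply,
      LinearMap.zero_apply, map_add, L1, L2, s8, s9, add_zero]
  have h9 : k' ∘ₗ k' = 0 := by
    ext v
    simp only [k', LinearMap.coe_comp, Function.comp_apply, LinearMap.zero_apply, L2, s9]
  have h2 : e' ∘ₗ e' = 0 := by
    ext u
    have h6p : ∀ x, p' (i' x) = x := fun x => by simpa using LinearMap.ext_iff.mp h6 x
    have e1 : e' (e' u) = e' (p' (i' (e' u))) := by rw [h6p]
    have e2 : e' (p' (i' (e' u))) = p' (Q' (i' (e' u))) :=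
      (LinearMap.ext_iff.mp h3 (i' (e' u))).symm
    have e3 : i' (e' u) = Q' (i' u) := LinearMap.ext_iff.mp h4 u
    simp only [LinearMap.coe_comp, Function.comp_apply, LinearMap.zero_apply]
    rw [e1, e2, e3, h1p, map_zero]
  exact ⟨h1, h2, h3, h4, h5, h6, h7, h8, h9⟩
end

section
/- Hodge decomposition (paper Lemma 'Hodge decomposition'): Let V be a finite-dimensional vector space over a field of characteristic zero, ω a nondegenerate alternating bilinear form on V, and Q : V → V a linear map with Q∘Q = 0 satisfying the compatibility ω(Qx, y) + ω(x, Qy) = 0 for all x, y ∈ V. Then there exist subspaces H and C of V such that, with B := range Q: V is the internal direct sum H ⊕ B ⊕ C; ker Q = H ⊕ B; the restriction of ω to H is nondegenerate; the restriction of ω to B ⊕ C is nondegenerate; and B and C are isotropic, i.e. ω(b, b') = 0 for all b, b' ∈ B and ω(c, c') = 0 for all c, c' ∈ C (so B and C are Lagrangian subspaces of B ⊕ C). -/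
/-!
Since `Q` is skew for `ω`, `ker Q` is the `ω`-orthogonal of `B = range Q`, and `Q ∘ Q = 0` makes
`B` isotropic. A complement `H` of `B` in `B^⊥` is nondegenerate: its radical is orthogonal to
`B ⊔ H = B^⊥`, hence lies in `B^⊥⊥ = B`, which meets `H` trivially. Then `W = H^⊥` is nondegenerate
of dimension `2 dim B`, so for any complement `C₀` of `B` in `W` the pairing `B × C₀ → K` is perfect.
Shearing `C₀` by the map `f : C₀ → B` with `ω (f c) c' = ω c c' / 2` turns it into an isotropic
complement `C` of `B` in `W`.
-/

open Module Submodule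
open LinearMap (BilinForm)

namespace Submodule

variable {R M : Type*} [Ring R] [AddCommGroup M] [Module R M]

theorem sup_range_subtype_sub_comp (B C₀ : Submodule R M) (f : C₀ →ₗ[R] B) :
    B ⊔ LinearMap.range (C₀.subtype - B.subtype ∘ₗ f) = B ⊔ C₀ := by
  refine le_antisymm (sup_le le_sup_left ?_) (sup_le le_sup_left fun c hc => ?_)
  · rintro _ ⟨c, rfl⟩
    exact sub_mem (mem_sup_right c.2) (mem_sup_left (f c).2)
  · rw [← sub_add_cancel c (f ⟨c, hc⟩ : M)]
    exact add_mem (mem_sup_right ⟨⟨c, hc⟩, rfl⟩) (mem_sup_left (f _).2)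

theorem disjoint_range_subtype_sub_comp {B C₀ : Submodule R M} (h : Disjoint B C₀)
    (f : C₀ →ₗ[R] B) : Disjoint B (LinearMap.range (C₀.subtype - B.subtype ∘ₗ f)) := by
  rw [disjoint_def]
  rintro _ hB ⟨c, rfl⟩
  have hcB : (c : M) ∈ B := by simpa using add_mem hB (f c).2
  have hc : c = 0 := Subtype.ext (disjoint_def.1 h _ hcB c.2)
  simp [hc]

theorem isInternal_fin_three_of_isCompl_sup {A B C : Submodule R M} (hBC : Disjoint B C)
    (hA : IsCompl A (B ⊔ C)) : DirectSum.IsInternal ![A, B, C] := by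
  have hB : Disjoint B (C ⊔ A) := hBC.disjoint_sup_right_of_disjoint_sup_left hA.disjoint.symm
  rw [DirectSum.isInternal_submodule_iff_iSupIndep_and_iSup_eq_top, iSupIndep_fin_three,
    iSup_fin_three]
  exact ⟨⟨hA.disjoint, hB, disjoint_sup_right_of_disjoint_sup_right hA.disjoint hB⟩,
    by simpa [sup_assoc] using hA.codisjoint.eq_top⟩

theorem finrank_add_eq_of_disjoint_of_sup_eq {K V : Type*} [DivisionRing K] [AddCommGroup V]
    [Module K V] [FiniteDimensional K V] {U W X : Submodule K V} (h : Disjoint U W)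
    (hX : U ⊔ W = X) : finrank K U + finrank K W = finrank K X := by
  subst hX
  rw [← finrank_sup_add_finrank_inf_eq, h.eq_bot, finrank_bot, add_zero]

end Submodule

namespace LinearMap.BilinForm

variable {K V : Type*} [Field K] [AddCommGroup V] [Module K V] {ω : BilinForm K V}

def IsIsotropic (ω : BilinForm K V) (W : Submodule K V) : Prop :=
  ∀ x ∈ W, ∀ y ∈ W, ω x y = 0

section SkewAdjoint

variable {Q : V →ₗ[K] V}

theorem ker_eq_orthogonal_range (hskew : ∀ x y, ω (Q x) y + ω x (Q y) = 0)
    (hnd : ω.Nondegenerate) : ker Q = ω.orthogonal (range Q) := by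
  ext x
  simp only [mem_ker, mem_orthogonal_iff, mem_range, forall_exists_index,
    forall_apply_eq_imp_iff]
  refine ⟨fun hx y => ?_, fun hx => hnd.2 _ fun y => ?_⟩
  · rw [eq_neg_of_add_eq_zero_left (hskew y x), hx, map_zero, neg_zero]
  · simpa [hx y] using hskew y x

theorem isIsotropic_range (hskew : ∀ x y, ω (Q x) y + ω x (Q y) = 0) (hQ2 : Q ∘ₗ Q = 0) :
    ω.IsIsotropic (range Q) := by
  rintro _ ⟨x, rfl⟩ _ ⟨y, rfl⟩
  rw [eq_neg_of_add_eq_zero_left (hskew x (Q y)), ← LinearMap.comp_apply Q Q y, hQ2,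
    LinearMap.zero_apply, map_zero, neg_zero]

end SkewAdjoint

theorem exists_isIsotropic_disjoint_sup_eq_of_surjective [NeZero (2 : K)] (halt : ω.IsAlt)
    {B C₀ : Submodule K V} (hB : ω.IsIsotropic B) (hdisj : Disjoint B C₀)
    (hsurj : Function.Surjective (ω.compl₁₂ B.subtype C₀.subtype)) :
    ∃ C, ω.IsIsotropic C ∧ Disjoint B C ∧ B ⊔ C = B ⊔ C₀ := by
  obtain ⟨g, hg⟩ := (ω.compl₁₂ B.subtype C₀.subtype).exists_rightInverse_of_surjective
    (range_eq_top.2 hsurj)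
  set f : C₀ →ₗ[K] B := g ∘ₗ ((2 : K)⁻¹ • ω.compl₁₂ C₀.subtype C₀.subtype)
  have hf (c c' : C₀) : ω (f c) c' = (2 : K)⁻¹ * ω c c' := by
    have := LinearMap.congr_fun
      (LinearMap.congr_fun hg ((2 : K)⁻¹ • ω.compl₁₂ C₀.subtype C₀.subtype c)) c'
    simp only [LinearMap.comp_apply, compl₁₂_apply, subtype_apply, id_apply, smul_apply,
      smul_eq_mul] at this
    exact this
  refine ⟨_, ?_, disjoint_range_subtype_sub_comp hdisj f, sup_range_subtype_sub_comp B C₀ f⟩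
  rintro _ ⟨c, rfl⟩ _ ⟨c', rfl⟩
  have hanti (x y : V) : ω y x = -ω x y := (halt.neg_eq x y).symm
  simp only [LinearMap.sub_apply, subtype_apply, LinearMap.comp_apply, map_sub,
    hB _ (f c).2 _ (f c').2, hf]
  rw [hanti (f c' : V) (c : V), hf, hanti (c : V) c']
  field_simp
  ring

variable [FiniteDimensional K V]

theorem compl₁₂_subtype_surjective {W B C₀ : Submodule K V}
    (hW : (ω.restrict W).Nondegenerate) (hB : ω.IsIsotropic B) (hsup : B ⊔ C₀ = W)
    (hrank : finrank K C₀ = finrank K B) :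
    Function.Surjective (ω.compl₁₂ B.subtype C₀.subtype) := by
  have hinj : Function.Injective (ω.compl₁₂ B.subtype C₀.subtype) := by
    rw [← ker_eq_bot, eq_bot_iff]
    intro b hb
    have hbW : (b : V) ∈ W := hsup ▸ mem_sup_left b.2
    have hb_rad : ∀ w : W, ω.restrict W ⟨b, hbW⟩ w = 0 := by
      rintro ⟨w, hw⟩
      obtain ⟨b', hb', c, hc, rfl⟩ := mem_sup.1 (hsup ▸ hw : w ∈ B ⊔ C₀)
      have hbc : ω b c = 0 := LinearMap.congr_fun (mem_ker.1 hb) ⟨c, hc⟩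
      simp [hB _ b.2 _ hb', hbc]
    simpa using congr_arg Subtype.val (hW.1 _ hb_rad)
  refine (injective_iff_surjective_of_finrank_eq_finrank ?_).1 hinj
  rw [Subspace.dual_finrank_eq, hrank]

theorem exists_isIsotropic_disjoint_sup_eq [NeZero (2 : K)] (halt : ω.IsAlt)
    {W B : Submodule K V} (hW : (ω.restrict W).Nondegenerate) (hB : ω.IsIsotropic B)
    (hBW : B ≤ W) (hrank : finrank K W = 2 * finrank K B) :
    ∃ C, ω.IsIsotropic C ∧ Disjoint B C ∧ B ⊔ C = W := by
  obtain ⟨C₀, hdisj, hsup⟩ := IsModularLattice.exists_disjoint_and_sup_eq hBW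
  have hC₀ : finrank K C₀ = finrank K B := by
    have := finrank_add_eq_of_disjoint_of_sup_eq hdisj hsup
    omega
  obtain ⟨C, hC, hBC, hBCsup⟩ := exists_isIsotropic_disjoint_sup_eq_of_surjective halt hB hdisj
    (compl₁₂_subtype_surjective hW hB hsup hC₀)
  exact ⟨C, hC, hBC, hBCsup.trans hsup⟩

theorem nondegenerate_restrict_of_sup_eq_orthogonal (hnd : ω.Nondegenerate) (hrefl : ω.IsRefl)
    {B H : Submodule K V} (hdisj : Disjoint B H) (hsup : B ⊔ H = ω.orthogonal B) :
    (ω.restrict H).Nondegenerate := by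
  refine ω.nondegenerate_restrict_of_disjoint_orthogonal hrefl ?_
  have hrad : H ⊓ ω.orthogonal H ≤ B := by
    rw [← ω.orthogonal_orthogonal hnd hrefl B, ← hsup]
    rintro x ⟨hxH, hxH'⟩ y hy
    obtain ⟨b, hb, h, hh, rfl⟩ := mem_sup.1 hy
    have hxB : x ∈ ω.orthogonal B := hsup ▸ mem_sup_right hxH
    simp [hxB b hb, hxH' h hh]
  exact disjoint_iff_inf_le.2 ((le_inf inf_le_left hrad).trans hdisj.symm.eq_bot.le)

theorem finrank_orthogonal_of_sup_eq_orthogonal (hnd : ω.Nondegenerate) {B H : Submodule K V}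
    (hdisj : Disjoint B H) (hsup : B ⊔ H = ω.orthogonal B) :
    finrank K (ω.orthogonal H) = 2 * finrank K B := by
  have hdim := finrank_add_eq_of_disjoint_of_sup_eq hdisj hsup
  rw [finrank_orthogonal hnd] at hdim ⊢
  have := Submodule.finrank_le B
  omega

theorem nondegenerate_restrict_orthogonal (hnd : ω.Nondegenerate) (hrefl : ω.IsRefl)
    {H : Submodule K V} (hH : (ω.restrict H).Nondegenerate) :
    (ω.restrict (ω.orthogonal H)).Nondegenerate := by
  refine ω.nondegenerate_restrict_of_disjoint_orthogonal hrefl ?_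
  rw [ω.orthogonal_orthogonal hnd hrefl]
  exact (ω.isCompl_orthogonal_of_restrict_nondegenerate hrefl hH).disjoint.symm

end LinearMap.BilinForm

open LinearMap.BilinForm

/-- **Hodge decomposition.** Let `V` be a finite-dimensional vector space over
a field of characteristic zero, `ω` a nondegenerate alternating bilinear form
on `V`, and `Q : V → V` linear with `Q∘Q = 0` and
`ω(Qx,y) + ω(x,Qy) = 0`. Then there are subspaces `H` and `C` such that, with
`B := range Q`: `V = H ⊕ B ⊕ C` (internal direct sum), `ker Q = H ⊕ B`,
`ω` restricted to `H` is nondegenerate, `ω` restricted to `B ⊕ C` is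
nondegenerate, and `B` and `C` are isotropic. -/
theorem hodge_decomposition
    {K V : Type*} [Field K] [CharZero K]
    [AddCommGroup V] [Module K V] [FiniteDimensional K V]
    (ω : LinearMap.BilinForm K V) (halt : ω.IsAlt) (hnd : ω.Nondegenerate)
    (Q : V →ₗ[K] V) (hQ2 : Q ∘ₗ Q = 0)
    (hcompat : ∀ x y : V, ω (Q x) y + ω x (Q y) = 0) :
    ∃ H C : Submodule K V,
      -- V is the internal direct sum H ⊕ B ⊕ C, with B = range Q
      DirectSum.IsInternal (![H, LinearMap.range Q, C] : Fin 3 → Submodule K V) ∧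
      -- ker Q = H ⊕ B
      LinearMap.ker Q = H ⊔ LinearMap.range Q ∧
      -- ω restricted to H is nondegenerate
      (LinearMap.BilinForm.restrict ω H).Nondegenerate ∧
      -- ω restricted to B ⊕ C is nondegenerate
      (LinearMap.BilinForm.restrict ω (LinearMap.range Q ⊔ C)).Nondegenerate ∧
      -- B is isotropic
      (∀ b ∈ LinearMap.range Q, ∀ b' ∈ LinearMap.range Q, ω b b' = 0) ∧
      -- C is isotropic
      (∀ c ∈ C, ∀ c' ∈ C, ω c c' = 0) := by
  have hrefl : ω.IsRefl := halt.isRefl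
  have hker := ker_eq_orthogonal_range hcompat hnd
  have hB := isIsotropic_range hcompat hQ2
  obtain ⟨H, hBH, hBHker⟩ :=
    IsModularLattice.exists_disjoint_and_sup_eq (LinearMap.range_le_ker_iff.2 hQ2)
  have hBHsup := hBHker.trans hker
  have hH := nondegenerate_restrict_of_sup_eq_orthogonal hnd hrefl hBH hBHsup
  have hW := nondegenerate_restrict_orthogonal hnd hrefl hH
  have hBW : LinearMap.range Q ≤ ω.orthogonal H :=
    (le_orthogonal_orthogonal hrefl).trans
      (LinearMap.BilinForm.orthogonal_le (hBHsup ▸ le_sup_right))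
  obtain ⟨C, hC, hBC, hBCW⟩ := exists_isIsotropic_disjoint_sup_eq halt hW hB hBW
    (finrank_orthogonal_of_sup_eq_orthogonal hnd hBH hBHsup)
  have hHBC : IsCompl H (LinearMap.range Q ⊔ C) :=
    hBCW ▸ isCompl_orthogonal_of_restrict_nondegenerate hrefl hH
  exact ⟨H, C, Submodule.isInternal_fin_three_of_isCompl_sup hBC hHBC,
    hBHker.symm.trans (sup_comm _ _), hH, hBCW ▸ hW, hB, hC⟩
end

section
/- Let V be a finite-dimensional vector space over a field, ω a nondegenerate alternating bilinear form on V, and Q : V → V a linear map with Q∘Q = 0 and ω(Qx, y) + ω(x, Qy) = 0 for all x, y ∈ V. Then ω(Qx, w) = 0 for every x ∈ V and every w ∈ ker Q, so ω descends to a well-defined bilinear form on the homology ker Q / range Q; moreover this induced bilinear form on ker Q / range Q is alternating and nondegenerate. -/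
/-!
For a cycle `w`, skew-adjointness gives `ω (Q x) w = -ω x (Q w) = 0`, so `ω` restricts to a
reflexive form on `ker Q` whose radical is `ker Q ∩ (ker Q)^⊥`. Skew-adjointness and
nondegeneracy give `(range Q)^⊥ = ker Q`, hence `(ker Q)^⊥ = range Q` in finite dimension:
the radical consists exactly of the boundaries in `ker Q`, and a reflexive form always descends to a
nondegenerate form on the quotient by its radical.
-/

namespace LinearMap

section QuotientByRadical

variable {R M P : Type*} [CommRing R] [AddCommGroup M] [Module R M] [AddCommGroup P] [Module R P]
  {B : M →ₗ[R] M →ₗ[R] P} {N : Submodule R M}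

theorem IsRefl.isRefl_liftQ₂ (hB : B.IsRefl) (hN : N ≤ ker B) : (hB.liftQ₂ B N hN).IsRefl := by
  intro x y
  induction x using Submodule.Quotient.induction_on
  induction y using Submodule.Quotient.induction_on
  exact hB _ _

theorem IsAlt.isAlt_liftQ₂ (hB : B.IsAlt) (hN : N ≤ ker B) :
    (hB.isRefl.liftQ₂ B N hN).IsAlt := by
  intro x
  induction x using Submodule.Quotient.induction_on
  exact hB _

theorem IsRefl.nondegenerate_liftQ₂_ker (hB : B.IsRefl) (hN : N = ker B) :
    (hB.liftQ₂ B N hN.le).Nondegenerate := by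
  refine (hB.isRefl_liftQ₂ hN.le).nondegenerate_iff_separatingLeft.mpr fun x hx => ?_
  induction x using Submodule.Quotient.induction_on with | H m => ?_
  rw [Submodule.Quotient.mk_eq_zero, hN, mem_ker]
  ext m'
  exact hx (Submodule.Quotient.mk m')

end QuotientByRadical

end LinearMap

namespace LinearMap.BilinForm

section CommRing

variable {R M : Type*} [CommRing R] [AddCommGroup M] [Module R M]

theorem ker_domRestrict₁₂_self {B : LinearMap.BilinForm R M} (hB : B.IsRefl) (W : Submodule R M) :
    ker (B.domRestrict₁₂ W W) = (B.orthogonal W).comap W.subtype := by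
  ext v
  simp only [mem_ker, Submodule.mem_comap, mem_orthogonal_iff, LinearMap.ext_iff,
    domRestrict₁₂_apply, Subtype.forall, Submodule.subtype_apply]
  exact forall₂_congr fun w _ => hB.eq_iff

variable {ω : LinearMap.BilinForm R M} {Q : M →ₗ[R] M}
  (hskew : ∀ x y : M, ω (Q x) y + ω x (Q y) = 0)
include hskew

theorem apply_map_eq_zero_of_mem_ker (x : M) {w : M} (hw : w ∈ ker Q) : ω (Q x) w = 0 := by
  simpa [mem_ker.mp hw] using hskew x w

theorem orthogonal_range_eq_ker (hω : ω.SeparatingRight) : ω.orthogonal (range Q) = ker Q := by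
  ext w
  simp only [mem_orthogonal_iff, mem_range, forall_exists_index, forall_apply_eq_imp_iff, mem_ker]
  refine ⟨fun h => hω _ fun x => ?_, fun hw x => apply_map_eq_zero_of_mem_ker hskew x hw⟩
  rw [← neg_eq_zero, ← eq_neg_of_add_eq_zero_left (hskew x w), h x]

end CommRing

theorem orthogonal_ker_eq_range {K V : Type*} [Field K] [AddCommGroup V] [Module K V]
    [FiniteDimensional K V] {ω : LinearMap.BilinForm K V} {Q : V →ₗ[K] V}
    (hskew : ∀ x y : V, ω (Q x) y + ω x (Q y) = 0) (hω : ω.Nondegenerate) (hrefl : ω.IsRefl) :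
    ω.orthogonal (ker Q) = range Q := by
  rw [← orthogonal_range_eq_ker hskew hω.2, orthogonal_orthogonal hω hrefl]

end LinearMap.BilinForm

open LinearMap LinearMap.BilinForm in
theorem homology_inherits_symplectic_form_general
    {K V : Type*} [Field K]
    [AddCommGroup V] [Module K V] [FiniteDimensional K V]
    (ω : LinearMap.BilinForm K V) (halt : ω.IsAlt) (hnd : ω.Nondegenerate)
    (Q : V →ₗ[K] V)
    (hcompat : ∀ x y : V, ω (Q x) y + ω x (Q y) = 0) :
    -- ω vanishes when one argument is a boundary and the other a cycle
    (∀ x : V, ∀ w ∈ LinearMap.ker Q, ω (Q x) w = 0) ∧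
    -- so it descends to a bilinear form on the homology ker Q / range Q,
    -- which is alternating and nondegenerate
    (∃ ωbar : LinearMap.BilinForm K
        ((LinearMap.ker Q) ⧸ (LinearMap.range Q).comap (LinearMap.ker Q).subtype),
      (∀ x y : LinearMap.ker Q,
        ωbar (Submodule.Quotient.mk x) (Submodule.Quotient.mk y) = ω x y) ∧
      ωbar.IsAlt ∧ ωbar.Nondegenerate) := by
  set B := ω.domRestrict₁₂ (ker Q) (ker Q)
  have hBalt : B.IsAlt := fun v => halt v
  have hradical : (range Q).comap (ker Q).subtype = ker B := by
    rw [ker_domRestrict₁₂_self halt.isRefl, orthogonal_ker_eq_range hcompat hnd halt.isRefl]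
  refine ⟨fun x _ hw => apply_map_eq_zero_of_mem_ker hcompat x hw,
    hBalt.isRefl.liftQ₂ B _ hradical.le, fun _ _ => rfl,
    hBalt.isAlt_liftQ₂ hradical.le, hBalt.isRefl.nondegenerate_liftQ₂_ker hradical⟩

/-- Let `V` be a finite-dimensional vector space over a field, `ω` a
nondegenerate alternating bilinear form on `V`, and `Q : V → V` linear with
`Q∘Q = 0` and `ω(Qx,y) + ω(x,Qy) = 0`. Then `ω(Qx,w) = 0` whenever
`Q w = 0`, so `ω` descends to a well-defined bilinear form on the homology
`ker Q / range Q`; the induced form is alternating and nondegenerate. -/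
theorem homology_inherits_symplectic_form
    {K V : Type*} [Field K]
    [AddCommGroup V] [Module K V] [FiniteDimensional K V]
    (ω : LinearMap.BilinForm K V) (halt : ω.IsAlt) (hnd : ω.Nondegenerate)
    (Q : V →ₗ[K] V) (hQ2 : Q ∘ₗ Q = 0)
    (hcompat : ∀ x y : V, ω (Q x) y + ω x (Q y) = 0) :
    -- ω vanishes when one argument is a boundary and the other a cycle
    (∀ x : V, ∀ w ∈ LinearMap.ker Q, ω (Q x) w = 0) ∧
    -- so it descends to a bilinear form on the homology ker Q / range Q,
    -- which is alternating and nondegenerate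
    (∃ ωbar : LinearMap.BilinForm K
        ((LinearMap.ker Q) ⧸ (LinearMap.range Q).comap (LinearMap.ker Q).subtype),
      (∀ x y : LinearMap.ker Q,
        ωbar (Submodule.Quotient.mk x) (Submodule.Quotient.mk y) = ω x y) ∧
      ωbar.IsAlt ∧ ωbar.Nondegenerate) :=
  homology_inherits_symplectic_form_general ω halt hnd Q hcompat
end
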